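/- Let H be a group with trivial center and A a finitely generated abelian group. Then the following are equivalent: (1) H × A has property FGFPa; (2) H has property FGFPa, and for every group homomorphism χ : H → ℝ (into the additive reals) whose image has torsion-free rank rk_ℤ(im χ) ≤ rk_ℤ(A), and for every automorphism ψ of H, the kernel of the restriction of χ to Fix ψ is finitely generated. (Case n = 1 of Theorem C of the paper.) -/

import Mathlib

/-- The subgroup of fixed points of an automorphism `φ` of `G`:
`Fix φ = {g ∈ G | φ(g) = g}`. -/
def fixedSubgroup {G : Type*} [Group G] (φ : G ≃* G) : Subgroup G where
  carrier := {g | φ g = g}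
  one_mem' := map_one φ
  mul_mem' := by
    intro a b ha hb
    simp only [Set.mem_setOf_eq, map_mul] at *
    rw [ha, hb]
  inv_mem' := by
    intro a ha
    simp only [Set.mem_setOf_eq, map_inv] at *
    rw [ha]

/-- A group `G` has property FGFPa if the fixed subgroup of every automorphism of `G`
is finitely generated. -/
def FGFPa (G : Type*) [Group G] : Prop :=
  ∀ φ : G ≃* G, Group.FG ↥(fixedSubgroup φ)

open scoped TensorProduct in
/-- The torsion-free rank `rk_ℤ` of a group: the dimension of the `ℚ`-vector space
`ℚ ⊗_ℤ M^{ab}`. For an abelian group this is the usual torsion-free rank. -/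
noncomputable def torsionFreeRank (M : Type*) [Group M] : ℕ :=
  Module.finrank ℚ (ℚ ⊗[ℤ] (Additive (Abelianization M)))

/-!
Since `Z(H) = 1`, an automorphism `φ` of `H × A` preserves the centre `1 × A`, so
`φ (h, a) = (σ h, δ h * α a)` with `σ ∈ Aut H`. Projecting `Fix φ` to `Fix σ` has kernel
inside `A`, and its image is the kernel on `Fix σ` of `δ` taken modulo the image of
`a ↦ a / α a`: a map into a finitely generated abelian group `X` with `rk X ≤ rk A`.
Embedding `X / torsion` into `ℝ` gives a real character `χ` with `rk (im χ) ≤ rk A`, whose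
kernel on `Fix σ` contains that image with finite index, as the torsion of `X` is finite.

Conversely, given `χ` with `rk (im χ) ≤ rk A`, the free abelian group `im χ` embeds into `A`
by some `ι`, and the fixed subgroup of `(h, a) ↦ (ψ h, ι (χ h) * a)` maps onto the kernel
of `χ` on `Fix ψ`.
-/

theorem Group.fg_of_mulEquiv {G G' : Type*} [Group G] [Group G'] [Group.FG G] (e : G ≃* G') :
    Group.FG G' :=
  Group.fg_of_surjective (f := e.toMonoidHom) e.surjective

theorem Group.fg_of_fg_ker_of_fg_range {G G' : Type*} [Group G] [Group G'] (f : G →* G')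
    (hker : Group.FG f.ker) (hrange : Group.FG f.range) : Group.FG G := by
  classical
  rw [Group.fg_iff_subgroup_fg] at hker hrange
  obtain ⟨S', hS'⟩ := hrange
  have hsub : (S' : Set G') ⊆ f '' Set.univ := fun y hy ↦ by
    have hy' : y ∈ f.range := hS' ▸ Subgroup.subset_closure hy
    obtain ⟨x, rfl⟩ := hy'
    exact ⟨x, Set.mem_univ x, rfl⟩
  obtain ⟨S, -, rfl⟩ := Finset.subset_set_image_iff.mp hsub
  have hS : (Subgroup.closure (S : Set G)).map f = f.range := by
    rw [MonoidHom.map_closure, ← hS', Finset.coe_image]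
  have htop : Subgroup.closure (S : Set G) ⊔ f.ker = ⊤ := by
    rw [← Subgroup.comap_map_eq, hS]
    ext g
    simp
  rw [Group.fg_def, ← htop]
  exact Subgroup.FG.sup ⟨S, rfl⟩ hker

theorem Subgroup.fg_of_commGroup {A : Type*} [CommGroup A] [Group.FG A] (K : Subgroup A) :
    Group.FG K := by
  rw [Group.fg_iff_subgroup_fg, Subgroup.fg_iff_add_fg,
    ← K.toAddSubgroup.toIntSubmodule_toAddSubgroup, ← Submodule.fg_iff_addSubgroup_fg]
  exact IsNoetherian.noetherian (R := ℤ) _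

theorem Group.fg_of_injective {G A : Type*} [Group G] [CommGroup A] [Group.FG A] {f : G →* A}
    (hf : Function.Injective f) : Group.FG G :=
  have := f.range.fg_of_commGroup
  Group.fg_of_mulEquiv (MonoidHom.ofInjective hf).symm

theorem MonoidHom.fg_ker_of_fg_comap {G X : Type*} [Group G] [Group X] (t : G →* X)
    (T : Subgroup X) [Finite T] [Group.FG (T.comap t)] : Group.FG t.ker := by
  let t' : T.comap t →* T := (t.comp (T.comap t).subtype).codRestrict T fun q ↦ q.2
  have hker : t'.ker = t.ker.subgroupOf (T.comap t) := by
    ext q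
    rw [MonoidHom.mem_ker, Subgroup.mem_subgroupOf, MonoidHom.mem_ker]
    exact Subtype.ext_iff
  have hfg : Group.FG t'.ker := inferInstance
  rw [hker] at hfg
  have hle : t.ker ≤ T.comap t := fun g hg ↦ by simp [MonoidHom.mem_ker.mp hg, T.one_mem]
  exact Group.fg_of_mulEquiv (Subgroup.subgroupOfEquivOfLe hle)

theorem torsionFreeRank_eq_finrank (M : Type*) [CommGroup M] :
    torsionFreeRank M = Module.finrank ℤ (Additive M) := by
  rw [torsionFreeRank, ← (TensorProduct.isBaseChange ℤ (Additive M) ℚ).finrank_eq]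
  exact LinearEquiv.finrank_eq <| LinearEquiv.baseChange ℤ ℚ _ _
    (MulEquiv.toAdditive (Abelianization.equivOfComm (H := M)).symm).toIntLinearEquiv

theorem Module.Free.exists_injective_of_linearIndependent {R M N : Type*} [CommRing R]
    [StrongRankCondition R] [AddCommGroup M] [Module R M] [Module.Free R M] [Module.Finite R M]
    [AddCommGroup N] [Module R N] {v : Fin (Module.finrank R M) → N}
    (hv : LinearIndependent R v) : ∃ f : M →ₗ[R] N, Function.Injective f :=
  let b := Module.Free.chooseBasis R M
  let e := Fintype.equivFinOfCardEq (Module.finrank_eq_card_chooseBasisIndex R M).symm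
  ⟨b.constr R (v ∘ e), b.injective_constr_of_linearIndependent (hv.comp e e.injective)⟩

section torsionFreeRank

variable {M N : Type*} [CommGroup M] [CommGroup N]

theorem torsionFreeRank_le_of_injective [Group.FG N] {f : M →* N} (hf : Function.Injective f) :
    torsionFreeRank M ≤ torsionFreeRank N := by
  rw [torsionFreeRank_eq_finrank, torsionFreeRank_eq_finrank]
  exact LinearMap.finrank_le_finrank_of_injective (f := f.toAdditive.toIntLinearMap) hf

theorem torsionFreeRank_le_of_surjective [Group.FG M] {f : M →* N} (hf : Function.Surjective f) :
    torsionFreeRank N ≤ torsionFreeRank M := by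
  rw [torsionFreeRank_eq_finrank, torsionFreeRank_eq_finrank]
  exact LinearMap.finrank_le_finrank_of_surjective (f := f.toAdditive.toIntLinearMap) hf

instance Additive.free_of_isMulTorsionFree [Group.FG M] [IsMulTorsionFree M] :
    Module.Free ℤ (Additive M) :=
  have := Module.isTorsionFree_int_iff_isAddTorsionFree (M := Additive M) |>.mpr inferInstance
  inferInstance

theorem exists_injective_of_torsionFreeRank_le [Group.FG M] [IsMulTorsionFree M] [Group.FG N]
    (h : torsionFreeRank M ≤ torsionFreeRank N) : ∃ f : M →* N, Function.Injective f := by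
  rw [torsionFreeRank_eq_finrank, torsionFreeRank_eq_finrank] at h
  obtain ⟨v, hv⟩ := exists_linearIndependent_of_le_finrank h
  obtain ⟨f, hf⟩ := Module.Free.exists_injective_of_linearIndependent hv
  exact ⟨MonoidHom.toAdditive.symm f.toAddMonoidHom, hf⟩

variable (M) in
theorem exists_hom_real_ker_eq_torsion [Group.FG M] :
    ∃ f : M →* Multiplicative ℝ, f.ker = CommGroup.torsion M := by
  have hrank : Module.rank ℤ ℝ = Cardinal.continuum := by
    rw [← IsLocalization.rank_eq ℚ (nonZeroDivisors ℤ) le_rfl, Real.rank_rat_real]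
  obtain ⟨v, hv⟩ := exists_linearIndependent_of_le_rank (R := ℤ) (M := ℝ)
    (n := Module.finrank ℤ (Additive (M ⧸ CommGroup.torsion M)))
    (hrank ▸ (Cardinal.nat_lt_continuum _).le)
  obtain ⟨g, hg⟩ := Module.Free.exists_injective_of_linearIndependent hv
  let g' := AddMonoidHom.toMultiplicativeRight g.toAddMonoidHom
  have hg' : g'.ker = ⊥ := (MonoidHom.ker_eq_bot_iff g').mpr hg
  refine ⟨g'.comp (QuotientGroup.mk' _), ?_⟩
  rw [← MonoidHom.comap_ker, hg', MonoidHom.comap_bot, QuotientGroup.ker_mk']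

end torsionFreeRank

theorem CommGroup.finite_torsion {X : Type*} [CommGroup X] [Group.FG X] :
    Finite (CommGroup.torsion X) :=
  have := (CommGroup.torsion X).fg_of_commGroup
  CommGroup.finite_of_fg_isMulTorsion _ fun x ↦ Submonoid.isOfFinOrder_coe.mp x.2

theorem Subgroup.fg_ker_of_forall_real {H X : Type*} [Group H] [CommGroup X] [Group.FG X]
    (K : Subgroup H) {n : ℕ}
    (hK : ∀ χ : H →* Multiplicative ℝ, torsionFreeRank χ.range ≤ n →
      Group.FG (χ.comp K.subtype).ker)
    (g : H →* X) (hX : torsionFreeRank X ≤ n) : Group.FG (g.comp K.subtype).ker := by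
  obtain ⟨f, hf⟩ := exists_hom_real_ker_eq_torsion X
  have hle : (f.comp g).range ≤ f.range := by
    rintro _ ⟨h, rfl⟩
    exact ⟨g h, rfl⟩
  have hrank : torsionFreeRank (f.comp g).range ≤ n := calc
    _ ≤ torsionFreeRank f.range :=
        torsionFreeRank_le_of_injective (Subgroup.inclusion_injective hle)
    _ ≤ torsionFreeRank X := torsionFreeRank_le_of_surjective f.rangeRestrict_surjective
    _ ≤ n := hX
  have : Finite (CommGroup.torsion X) := CommGroup.finite_torsion
  have : Group.FG ((CommGroup.torsion X).comap (g.comp K.subtype)) := by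
    rw [← hf, MonoidHom.comap_ker]
    exact hK _ hrank
  exact (g.comp K.subtype).fg_ker_of_fg_comap (CommGroup.torsion X)

theorem FGFPa.fg {G : Type*} [Group G] (h : FGFPa G) : Group.FG G := by
  have hrefl : fixedSubgroup (MulEquiv.refl G) = ⊤ := by
    ext
    exact iff_of_true rfl trivial
  have := h (MulEquiv.refl G)
  rw [hrefl] at this
  exact Group.fg_of_mulEquiv Subgroup.topEquiv

section prodShear

variable {H A : Type*} [Group H] [CommGroup A]

namespace MulEquiv

def prodShear (ψ : H ≃* H) (δ : H →* A) : (H × A) ≃* (H × A) where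
  toFun p := (ψ p.1, δ p.1 * p.2)
  invFun p := (ψ.symm p.1, (δ (ψ.symm p.1))⁻¹ * p.2)
  left_inv p := by simp
  right_inv p := by simp
  map_mul' p q := by
    ext
    · simp
    · simp [mul_mul_mul_comm]

theorem mem_fixedSubgroup_prodShear {ψ : H ≃* H} {δ : H →* A} {p : H × A} :
    p ∈ fixedSubgroup (prodShear ψ δ) ↔ ψ p.1 = p.1 ∧ δ p.1 = 1 := by
  show (ψ p.1, δ p.1 * p.2) = p ↔ _
  rw [Prod.ext_iff, mul_eq_right]

theorem fg_ker_of_fg_fixedSubgroup_prodShear (ψ : H ≃* H) (δ : H →* A)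
    (h : Group.FG (fixedSubgroup (prodShear ψ δ))) :
    Group.FG (δ.comp (fixedSubgroup ψ).subtype).ker := by
  let F : fixedSubgroup (prodShear ψ δ) →* (δ.comp (fixedSubgroup ψ).subtype).ker :=
    { toFun p := ⟨⟨p.1.1, (mem_fixedSubgroup_prodShear.mp p.2).1⟩,
        (mem_fixedSubgroup_prodShear.mp p.2).2⟩
      map_one' := rfl
      map_mul' _ _ := rfl }
  refine Group.fg_of_surjective (f := F) fun ⟨⟨x, hx⟩, hδ⟩ ↦ ?_
  exact ⟨⟨(x, 1), mem_fixedSubgroup_prodShear.mpr ⟨hx, hδ⟩⟩, rfl⟩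

end MulEquiv

theorem FGFPa.of_prod (h : FGFPa (H × A)) : FGFPa H := fun ψ ↦ by
  have := MulEquiv.fg_ker_of_fg_fixedSubgroup_prodShear ψ (1 : H →* A) (h _)
  rw [MonoidHom.one_comp, MonoidHom.ker_one] at this
  exact Group.fg_of_mulEquiv Subgroup.topEquiv

theorem FGFPa.fg_ker_of_prod [Group.FG A] (h : FGFPa (H × A)) (χ : H →* Multiplicative ℝ)
    (ψ : H ≃* H) (hχ : torsionFreeRank χ.range ≤ torsionFreeRank A) :
    Group.FG (χ.comp (fixedSubgroup ψ).subtype).ker := by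
  have := h.of_prod.fg
  obtain ⟨f, hf⟩ := exists_injective_of_torsionFreeRank_le hχ
  have hker : ((f.comp χ.rangeRestrict).comp (fixedSubgroup ψ).subtype).ker =
      (χ.comp (fixedSubgroup ψ).subtype).ker := by
    ext x
    simp [map_eq_one_iff f hf, Subtype.ext_iff]
  exact hker ▸ MulEquiv.fg_ker_of_fg_fixedSubgroup_prodShear ψ _ (h _)

end prodShear

section centerless

variable {H A : Type*} [Group H] [CommGroup A]

namespace MulEquiv

variable (φ : (H × A) ≃* (H × A))

def fstInl : H →* H := (MonoidHom.fst H A).comp (φ.toMonoidHom.comp (MonoidHom.inl H A))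

def sndInl : H →* A := (MonoidHom.snd H A).comp (φ.toMonoidHom.comp (MonoidHom.inl H A))

def sndInr : A →* A := (MonoidHom.snd H A).comp (φ.toMonoidHom.comp (MonoidHom.inr H A))

/-- A fixed point `h` of `φ.fstAut` lifts to a fixed point of `φ` iff this vanishes at `h`. -/
def liftObstruction : H →* A ⧸ (MonoidHom.id A / φ.sndInr).range :=
  (QuotientGroup.mk' _).comp φ.sndInl

variable (hZ : Subgroup.center H = ⊥)
include hZ

theorem fst_apply_one_mk (a : A) : (φ (1, a)).1 = 1 := by
  have key : ∀ p : H × A, p ∈ Set.center (H × A) ↔ p.1 = 1 := fun p ↦ by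
    rw [Set.center_prod, Set.center_eq_univ, Set.mem_prod, ← Subgroup.coe_center, hZ]
    simp
  exact (key _).mp ((MulEquivClass.apply_mem_center_iff φ).mpr ((key _).mpr rfl))

theorem apply_eq_of_center_eq_bot (p : H × A) :
    φ p = (φ.fstInl p.1, φ.sndInl p.1 * φ.sndInr p.2) := by
  have hsplit : p = (p.1, 1) * (1, p.2) := by simp
  conv_lhs => rw [hsplit, map_mul]
  ext
  · simp [fstInl, fst_apply_one_mk φ hZ]
  · rfl

theorem fst_apply_of_center_eq_bot (p : H × A) : (φ p).1 = φ.fstInl p.1 := by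
  rw [apply_eq_of_center_eq_bot φ hZ]

def fstAut : H ≃* H :=
  { φ.fstInl with
    invFun := φ.symm.fstInl
    left_inv h := by
      have := fst_apply_of_center_eq_bot φ.symm hZ (φ (h, 1))
      rw [symm_apply_apply] at this
      exact this.symm
    right_inv h := by
      have := fst_apply_of_center_eq_bot φ hZ (φ.symm (h, 1))
      rw [apply_symm_apply] at this
      exact this.symm }

theorem mem_fixedSubgroup_iff_of_center_eq_bot {p : H × A} :
    p ∈ fixedSubgroup φ ↔
      p.1 ∈ fixedSubgroup (φ.fstAut hZ) ∧
        φ.sndInl p.1 = (MonoidHom.id A / φ.sndInr) p.2 := by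
  show φ p = p ↔ _
  rw [apply_eq_of_center_eq_bot φ hZ, Prod.ext_iff, MonoidHom.div_apply, eq_div_iff_mul_eq']
  rfl

def fixedSubgroupFst : fixedSubgroup φ →* fixedSubgroup (φ.fstAut hZ) :=
  ((MonoidHom.fst H A).comp (fixedSubgroup φ).subtype).codRestrict _ fun p ↦
    ((mem_fixedSubgroup_iff_of_center_eq_bot φ hZ).mp p.2).1

theorem range_fixedSubgroupFst :
    (φ.fixedSubgroupFst hZ).range =
      (φ.liftObstruction.comp (fixedSubgroup (φ.fstAut hZ)).subtype).ker := by
  ext x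
  simp only [MonoidHom.mem_range, MonoidHom.mem_ker, MonoidHom.comp_apply, liftObstruction,
    QuotientGroup.mk'_apply, QuotientGroup.eq_one_iff]
  constructor
  · rintro ⟨p, rfl⟩
    exact ⟨(p : H × A).2, ((mem_fixedSubgroup_iff_of_center_eq_bot φ hZ).mp p.2).2.symm⟩
  · rintro ⟨a, ha⟩
    exact ⟨⟨(x, a), (mem_fixedSubgroup_iff_of_center_eq_bot φ hZ).mpr ⟨x.2, ha.symm⟩⟩,
      rfl⟩

theorem fg_ker_fixedSubgroupFst [Group.FG A] : Group.FG (φ.fixedSubgroupFst hZ).ker := by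
  refine Group.fg_of_injective (f := (MonoidHom.snd H A).comp
    ((fixedSubgroup φ).subtype.comp (φ.fixedSubgroupFst hZ).ker.subtype)) fun x y hxy ↦ ?_
  have hfst : ∀ z : (φ.fixedSubgroupFst hZ).ker, (z : H × A).1 = 1 :=
    fun z ↦ congrArg Subtype.val z.2
  exact Subtype.ext <| Subtype.ext <| Prod.ext ((hfst x).trans (hfst y).symm) hxy

theorem fg_fixedSubgroup_of_center_eq_bot [Group.FG A]
    (h : Group.FG (φ.liftObstruction.comp (fixedSubgroup (φ.fstAut hZ)).subtype).ker) :
    Group.FG (fixedSubgroup φ) :=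
  Group.fg_of_fg_ker_of_fg_range _ (φ.fg_ker_fixedSubgroupFst hZ)
    (φ.range_fixedSubgroupFst hZ ▸ h)

end MulEquiv

end centerless

/-- (Theorem C with n = 1.) For `H` centerless and `A` finitely
generated abelian, `H × A` has FGFPa iff `H` has FGFPa and for every homomorphism
`χ : H → ℝ` with `rk_ℤ(im χ) ≤ rk_ℤ(A)` and every automorphism `ψ` of `H`, the kernel
of the restriction of `χ` to `Fix ψ` is finitely generated. -/
theorem FGFPa_product_iff {H A : Type*} [Group H] [CommGroup A]
    (hZ : Subgroup.center H = ⊥) (hA : Group.FG A) :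
    FGFPa (H × A) ↔
      (FGFPa H ∧
        ∀ (χ : H →* Multiplicative ℝ) (ψ : H ≃* H),
          torsionFreeRank ↥χ.range ≤ torsionFreeRank A →
          Group.FG ↥(MonoidHom.ker (χ.comp (fixedSubgroup ψ).subtype))) := by
  refine ⟨fun h ↦ ⟨h.of_prod, h.fg_ker_of_prod⟩, fun ⟨_, hχ⟩ φ ↦ ?_⟩
  refine φ.fg_fixedSubgroup_of_center_eq_bot hZ <|
    (fixedSubgroup (φ.fstAut hZ)).fg_ker_of_forall_real (hχ · _) _ ?_
  exact torsionFreeRank_le_of_surjective (QuotientGroup.mk'_surjective _)
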